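/- arXiv:2209.04208 — 5 statements merged into one kernel-verified Lean document; each statement's English description precedes it below -/
import Mathlib

section
/- Let T : (ℝ₊*)ⁿ → ℝⁿ be continuous and isotone, and suppose S⁺ = {y : y ≤ T(y)} is nonempty and bounded above. Then the vector y□ with components y□ᵢ = sup{yᵢ : y ∈ S⁺} belongs to S⁺, is a fixed point of T, and dominates every fixed point of T componentwise. -/
theorem stmt4 {n : ℕ} (T : (Fin n → ℝ) → (Fin n → ℝ))
    (hcont : ContinuousOn T {y : Fin n → ℝ | ∀ i, 0 < y i})
    (hT : ∀ y z : Fin n → ℝ, (∀ i, 0 < y i) → (∀ i, 0 < z i) → y ≤ z → T y ≤ T z)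
    (hne : ∃ y : Fin n → ℝ, (∀ i, 0 < y i) ∧ y ≤ T y)
    (hbd : ∃ k : Fin n → ℝ, ∀ y : Fin n → ℝ, (∀ i, 0 < y i) → y ≤ T y → y ≤ k)
    (yb : Fin n → ℝ)
    (hyb : ∀ i, yb i = sSup ((fun y : Fin n → ℝ => y i) ''
      {y : Fin n → ℝ | (∀ j, 0 < y j) ∧ y ≤ T y})) :
    (∀ i, 0 < yb i) ∧ yb ≤ T yb ∧ T yb = yb ∧
      ∀ z : Fin n → ℝ, (∀ i, 0 < z i) → T z = z → z ≤ yb := by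
  obtain ⟨y0, hy0pos, hy0⟩ := hne
  obtain ⟨k, hk⟩ := hbd
  set S : Set (Fin n → ℝ) := {y : Fin n → ℝ | (∀ j, 0 < y j) ∧ y ≤ T y} with hS
  have hbdd : ∀ i, BddAbove ((fun y : Fin n → ℝ => y i) '' S) := by
    intro i
    exact ⟨k i, by rintro x ⟨y, ⟨hyp, hyt⟩, rfl⟩; exact hk y hyp hyt i⟩
  have hmemS : y0 ∈ S := ⟨hy0pos, hy0⟩
  -- every member of S is ≤ yb
  have hle : ∀ y ∈ S, y ≤ yb := by
    intro y hy i
    rw [hyb i]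
    exact le_csSup (hbdd i) ⟨y, hy, rfl⟩
  have hybpos : ∀ i, 0 < yb i := fun i => lt_of_lt_of_le (hy0pos i) (hle y0 hmemS i)
  have hybT : yb ≤ T yb := by
    intro i
    rw [hyb i]
    refine csSup_le ⟨y0 i, ⟨y0, hmemS, rfl⟩⟩ ?_
    rintro x ⟨y, ⟨hyp, hyt⟩, rfl⟩
    exact le_trans (hyt i) (hT y yb hyp hybpos (hle y ⟨hyp, hyt⟩) i)
  have hTpos : ∀ i, 0 < T yb i := fun i => lt_of_lt_of_le (hybpos i) (hybT i)
  have hTT : T yb ≤ T (T yb) := hT yb (T yb) hybpos hTpos hybT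
  have hTmem : T yb ∈ S := ⟨hTpos, hTT⟩
  have hfix : T yb = yb := le_antisymm (hle _ hTmem) hybT
  exact ⟨hybpos, hybT, hfix, fun z hzpos hz => hle z ⟨hzpos, le_of_eq hz.symm⟩⟩
end

section
/- Let T : (ℝ₊*)ⁿ → ℝⁿ be continuous, isotone, and bounded above by k ∈ (ℝ₊*)ⁿ, and suppose T has at least one fixed point. Then for every starting point y₀ with k ≤ y₀, the fixed point iteration sequence is defined for all steps, is antitone (monotone nonincreasing), and converges to the dominant fixed point y□ of T. -/
theorem stmt5 {n : ℕ} (T : (Fin n → ℝ) → (Fin n → ℝ))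
    (hcont : ContinuousOn T {y : Fin n → ℝ | ∀ i, 0 < y i})
    (hT : ∀ y z : Fin n → ℝ, (∀ i, 0 < y i) → (∀ i, 0 < z i) → y ≤ z → T y ≤ T z)
    (k : Fin n → ℝ) (hk : ∀ i, 0 < k i)
    (hbd : ∀ y : Fin n → ℝ, (∀ i, 0 < y i) → T y ≤ k)
    (yb : Fin n → ℝ) (hybpos : ∀ i, 0 < yb i) (hybfix : T yb = yb)
    (hdom : ∀ z : Fin n → ℝ, (∀ i, 0 < z i) → T z = z → z ≤ yb)
    (y₀ : Fin n → ℝ) (hky₀ : k ≤ y₀)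
    (Y : ℕ → Fin n → ℝ) (hY0 : Y 0 = y₀) (hYrec : ∀ r, Y (r + 1) = T (Y r)) :
    (∀ r, ∀ i, 0 < Y r i) ∧ Antitone Y ∧
      Filter.Tendsto Y Filter.atTop (nhds yb) := by
  have hybk : yb ≤ k := by
    have := hbd yb hybpos
    rwa [hybfix] at this
  -- yb ≤ Y r for all r
  have hlow : ∀ r, yb ≤ Y r := by
    intro r
    induction r with
    | zero => rw [hY0]; exact le_trans hybk hky₀
    | succ r ih =>
      have hpos : ∀ i, 0 < Y r i := fun i => lt_of_lt_of_le (hybpos i) (ih i)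
      have := hT yb (Y r) hybpos hpos ih
      rw [hybfix] at this
      rwa [hYrec r]
  have hpos : ∀ r, ∀ i, 0 < Y r i := fun r i => lt_of_lt_of_le (hybpos i) (hlow r i)
  have hstep : ∀ r, Y (r + 1) ≤ Y r := by
    intro r
    induction r with
    | zero =>
      rw [hYrec 0, hY0]
      exact le_trans (hbd y₀ (fun i => lt_of_lt_of_le (hk i) (hky₀ i))) hky₀
    | succ r ih =>
      rw [hYrec (r + 1)]
      calc T (Y (r + 1)) ≤ T (Y r) := hT _ _ (hpos (r + 1)) (hpos r) ih
        _ = Y (r + 1) := (hYrec r).symm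
  have hanti : Antitone Y := antitone_nat_of_succ_le hstep
  refine ⟨hpos, hanti, ?_⟩
  set L : Fin n → ℝ := fun i => ⨅ r, Y r i with hL
  have hbdd : ∀ i, BddBelow (Set.range fun r => Y r i) := by
    intro i
    exact ⟨yb i, by rintro x ⟨r, rfl⟩; exact hlow r i⟩
  have htend : ∀ i, Filter.Tendsto (fun r => Y r i) Filter.atTop (nhds (L i)) := by
    intro i
    exact tendsto_atTop_ciInf (fun a b hab => hanti hab i) (hbdd i)
  have hYL : Filter.Tendsto Y Filter.atTop (nhds L) := tendsto_pi_nhds.mpr htend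
  have hybL : yb ≤ L := fun i => le_ciInf (fun r => hlow r i)
  have hLpos : ∀ i, 0 < L i := fun i => lt_of_lt_of_le (hybpos i) (hybL i)
  have hYL' : Filter.Tendsto Y Filter.atTop
      (nhdsWithin L {y : Fin n → ℝ | ∀ i, 0 < y i}) :=
    tendsto_nhdsWithin_of_tendsto_nhds_of_eventually_within Y hYL
      (Filter.Eventually.of_forall (fun r => hpos r))
  have hTL : Filter.Tendsto (fun r => T (Y r)) Filter.atTop (nhds (T L)) :=
    (hcont L hLpos).tendsto.comp hYL'
  have hshift : Filter.Tendsto (fun r => Y (r + 1)) Filter.atTop (nhds L) :=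
    hYL.comp (Filter.tendsto_add_atTop_nat 1)
  have hTLfix : T L = L := by
    have : (fun r => T (Y r)) = fun r => Y (r + 1) := by
      funext r; exact (hYrec r).symm
    rw [this] at hTL
    exact tendsto_nhds_unique hTL hshift
  have : L = yb := le_antisymm (hdom L hLpos hTLfix) hybL
  rwa [this] at hYL
end

section
/- Let T : (ℝ₊*)ⁿ → ℝⁿ be continuous, isotone, and bounded above, with dominant fixed point y□. If y₀, ȳ₀ ∈ (ℝ₊*)ⁿ satisfy ȳ₀ ≤ y₀ and the fixed point iteration from ȳ₀ converges to y□, then the fixed point iteration from y₀ also converges to y□. -/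
theorem stmt6 {n : ℕ} (T : (Fin n → ℝ) → (Fin n → ℝ))
    (hcont : ContinuousOn T {y : Fin n → ℝ | ∀ i, 0 < y i})
    (hT : ∀ y z : Fin n → ℝ, (∀ i, 0 < y i) → (∀ i, 0 < z i) → y ≤ z → T y ≤ T z)
    (k : Fin n → ℝ) (hbd : ∀ y : Fin n → ℝ, (∀ i, 0 < y i) → T y ≤ k)
    (yb : Fin n → ℝ) (hybpos : ∀ i, 0 < yb i) (hybfix : T yb = yb)
    (hdom : ∀ z : Fin n → ℝ, (∀ i, 0 < z i) → T z = z → z ≤ yb)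
    (y₀ z₀ : Fin n → ℝ) (hy₀ : ∀ i, 0 < y₀ i) (hz₀ : ∀ i, 0 < z₀ i)
    (hle : z₀ ≤ y₀)
    (Z : ℕ → Fin n → ℝ) (hZ0 : Z 0 = z₀) (hZrec : ∀ r, Z (r + 1) = T (Z r))
    (hZpos : ∀ r, ∀ i, 0 < Z r i)
    (hZconv : Filter.Tendsto Z Filter.atTop (nhds yb))
    (Y : ℕ → Fin n → ℝ) (hY0 : Y 0 = y₀) (hYrec : ∀ r, Y (r + 1) = T (Y r)) :
    (∀ r, ∀ i, 0 < Y r i) ∧ Filter.Tendsto Y Filter.atTop (nhds yb) := by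
  classical
  -- upper starting point
  set w₀ : Fin n → ℝ := fun i => max (y₀ i) (max (k i) (yb i)) with hw₀
  have hy₀w : y₀ ≤ w₀ := fun i => le_max_left _ _
  have hkw : k ≤ w₀ := fun i => le_trans (le_max_left _ _) (le_max_right _ _)
  have hybw : yb ≤ w₀ := fun i => le_trans (le_max_right _ _) (le_max_right _ _)
  -- upper iteration
  set W : ℕ → Fin n → ℝ := fun r => T^[r] w₀ with hW
  have hW0 : W 0 = w₀ := rfl
  have hWrec : ∀ r, W (r + 1) = T (W r) := by
    intro r; simp [hW, Function.iterate_succ_apply']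
  -- yb ≤ W r, hence positivity
  have hybW : ∀ r, yb ≤ W r := by
    intro r; induction r with
    | zero => simpa [hW0] using hybw
    | succ r ih =>
      have hWpos : ∀ i, 0 < W r i := fun i => lt_of_lt_of_le (hybpos i) (ih i)
      rw [hWrec, ← hybfix]
      exact hT yb (W r) hybpos hWpos ih
  have hWpos : ∀ r, ∀ i, 0 < W r i := fun r i => lt_of_lt_of_le (hybpos i) (hybW r i)
  -- W decreasing
  have hWdec : ∀ r, W (r + 1) ≤ W r := by
    intro r; induction r with
    | zero =>
      rw [hWrec, hW0]
      exact le_trans (hbd w₀ (fun i => lt_of_lt_of_le (hy₀ i) (hy₀w i))) hkw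
    | succ r ih =>
      calc W (r + 1 + 1) = T (W (r + 1)) := hWrec _
        _ ≤ T (W r) := hT _ _ (hWpos _) (hWpos _) ih
        _ = W (r + 1) := (hWrec _).symm
  have hWanti : ∀ i, Antitone fun r => W r i := by
    intro i
    exact antitone_nat_of_succ_le fun r => hWdec r i
  -- limit of W
  set w : Fin n → ℝ := fun i => ⨅ r, W r i with hw
  have hWbdd : ∀ i, BddBelow (Set.range fun r => W r i) :=
    fun i => ⟨yb i, fun x ⟨r, hr⟩ => hr ▸ hybW r i⟩
  have hWconv : Filter.Tendsto W Filter.atTop (nhds w) := by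
    rw [tendsto_pi_nhds]
    intro i
    exact tendsto_atTop_ciInf (hWanti i) (hWbdd i)
  have hybwle : yb ≤ w := fun i => le_ciInf fun r => hybW r i
  have hwpos : ∀ i, 0 < w i := fun i => lt_of_lt_of_le (hybpos i) (hybwle i)
  -- w is a fixed point
  have hwfix : T w = w := by
    have hmem : ∀ r, W r ∈ {y : Fin n → ℝ | ∀ i, 0 < y i} := hWpos
    have hW' : Filter.Tendsto W Filter.atTop (nhdsWithin w {y : Fin n → ℝ | ∀ i, 0 < y i}) := by
      rw [tendsto_nhdsWithin_iff]
      exact ⟨hWconv, Filter.Eventually.of_forall hmem⟩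
    have h1 : Filter.Tendsto (fun r => T (W r)) Filter.atTop (nhds (T w)) :=
      (hcont w hwpos).tendsto.comp hW'
    have h2 : Filter.Tendsto (fun r => T (W r)) Filter.atTop (nhds w) :=
      (hWconv.comp (Filter.tendsto_add_atTop_nat 1)).congr fun a => hWrec a
    exact tendsto_nhds_unique h1 h2
  have hweq : w = yb := le_antisymm (hdom w hwpos hwfix) hybwle
  have hWconv' : Filter.Tendsto W Filter.atTop (nhds yb) := hweq ▸ hWconv
  -- squeeze: Z r ≤ Y r ≤ W r
  have hsq : ∀ r, Z r ≤ Y r ∧ Y r ≤ W r := by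
    intro r; induction r with
    | zero =>
      rw [hZ0, hY0, hW0]
      exact ⟨hle, hy₀w⟩
    | succ r ih =>
      have hYpos : ∀ i, 0 < Y r i := fun i => lt_of_lt_of_le (hZpos r i) (ih.1 i)
      rw [hZrec, hYrec, hWrec]
      exact ⟨hT _ _ (hZpos r) hYpos ih.1, hT _ _ hYpos (hWpos r) ih.2⟩
  have hYpos : ∀ r, ∀ i, 0 < Y r i := fun r i => lt_of_lt_of_le (hZpos r i) ((hsq r).1 i)
  refine ⟨hYpos, ?_⟩
  rw [tendsto_pi_nhds]
  intro i
  have hZi : Filter.Tendsto (fun r => Z r i) Filter.atTop (nhds (yb i)) :=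
    tendsto_pi_nhds.mp hZconv i
  have hWi : Filter.Tendsto (fun r => W r i) Filter.atTop (nhds (yb i)) :=
    tendsto_pi_nhds.mp hWconv' i
  exact tendsto_of_tendsto_of_tendsto_of_le_of_le hZi hWi
    (fun r => (hsq r).1 i) (fun r => (hsq r).2 i)
end

section
/- Let T : (ℝ₊*)ⁿ → ℝⁿ satisfy T(ȳ) − T(y) = M(ȳ,y)(ȳ − y) with M(ȳ,y) nonnegative and irreducible for all y, ȳ. If y and ȳ are fixed points of T with y ≤ ȳ and y ≠ ȳ, then in fact y < ȳ strictly in every component and ρ(M(ȳ,y)) = 1. -/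
noncomputable def specRad {n : ℕ} (A : Matrix (Fin n) (Fin n) ℝ) : ℝ :=
  sSup ((fun mu : ℂ => ‖mu‖) '' spectrum ℂ (A.map (Complex.ofReal)))

/-- A matrix is reducible if some simultaneous permutation of rows and columns
puts it in block upper triangular form with a nontrivial zero lower-left block. -/
def MatReducible {n : ℕ} (B : Matrix (Fin n) (Fin n) ℝ) : Prop :=
  ∃ σ : Equiv.Perm (Fin n), ∃ r : ℕ, 1 ≤ r ∧ r ≤ n - 1 ∧
    ∀ i j : Fin n, r ≤ (i : ℕ) → (j : ℕ) < r → B (σ i) (σ j) = 0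

def MatIrreducible {n : ℕ} (B : Matrix (Fin n) (Fin n) ℝ) : Prop :=
  ¬ MatReducible B

/-!
At two fixed points the hypothesis on `T` says that `z - y` is an eigenvector of `M z y` for the
eigenvalue `1`. A nonnegative eigenvector of a nonnegative irreducible matrix is positive, since
its zero set would split off a zero block. Moreover a positive eigenvector `v` for `r` bounds
every eigenvalue `μ` by `r`: compare `|μ| |wᵢ|` with `r |wᵢ|` at an index maximising `|wᵢ| / vᵢ`.
-/

open Finset Matrix

lemma Fin.exists_perm_mem_iff_lt_card {n : ℕ} (p : Fin n → Prop) [DecidablePred p] :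
    ∃ σ : Equiv.Perm (Fin n), ∀ i, p (σ i) ↔ (i : ℕ) < Fintype.card {x // p x} := by
  set r := Fintype.card {x // p x}
  have hr : r ≤ n := by simpa using Fintype.card_subtype_le p
  let e : {i : Fin n // (i : ℕ) < r} ≃ {x // p x} :=
    Fintype.equivOfCardEq (Fintype.card_fin_lt_of_le hr)
  let f : {i : Fin n // ¬ (i : ℕ) < r} ≃ {x // ¬ p x} :=
    Fintype.equivOfCardEq (by
      rw [Fintype.card_subtype_compl, Fintype.card_subtype_compl, Fintype.card_fin_lt_of_le hr])
  refine ⟨Equiv.subtypeCongr e f, fun i => ?_⟩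
  by_cases hi : (i : ℕ) < r
  · simpa [Equiv.subtypeCongr, hi] using (e ⟨i, hi⟩).2
  · simpa [Equiv.subtypeCongr, hi] using (f ⟨i, hi⟩).2

lemma matReducible_of_zero_block {n : ℕ} (B : Matrix (Fin n) (Fin n) ℝ) (p : Fin n → Prop)
    (hp : ∃ i, p i) (hnp : ∃ i, ¬ p i) (hB : ∀ i j, ¬ p i → p j → B i j = 0) :
    MatReducible B := by
  classical
  obtain ⟨σ, hσ⟩ := Fin.exists_perm_mem_iff_lt_card p
  have hpos : 0 < Fintype.card {x // p x} := Fintype.card_pos_iff.2 ⟨⟨_, hp.choose_spec⟩⟩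
  have hlt : Fintype.card {x // p x} < n := by
    simpa using Fintype.card_subtype_lt hnp.choose_spec
  refine ⟨σ, _, hpos, by omega, fun i j hi hj => hB _ _ ?_ ((hσ j).2 hj)⟩
  exact fun h => absurd ((hσ i).1 h) (by omega)

lemma Matrix.mem_spectrum_iff_exists_mulVec_eq_smul {K ι : Type*} [Field K] [Fintype ι]
    [DecidableEq ι] (B : Matrix ι ι K) (μ : K) :
    μ ∈ spectrum K B ↔ ∃ w ≠ 0, B *ᵥ w = μ • w := by
  rw [spectrum.mem_iff, isUnit_iff_isUnit_det, isUnit_iff_ne_zero, not_not,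
    ← exists_mulVec_eq_zero_iff]
  simp only [sub_mulVec, Algebra.algebraMap_eq_smul_one, smul_mulVec, one_mulVec, sub_eq_zero,
    eq_comm]

lemma MatIrreducible.pos_of_mulVec_eq_smul {n : ℕ} {A : Matrix (Fin n) (Fin n) ℝ}
    (hirr : MatIrreducible A) (hA : ∀ i j, 0 ≤ A i j) {v : Fin n → ℝ} {r : ℝ}
    (hv : ∀ i, 0 ≤ v i) (hv0 : v ≠ 0) (heig : A *ᵥ v = r • v) : ∀ i, 0 < v i := by
  by_contra! ⟨i₀, hi₀⟩
  refine hirr (matReducible_of_zero_block A (fun i => v i ≠ 0) ?_ ⟨i₀, ?_⟩ fun a b ha hb => ?_)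
  · by_contra! h
    exact hv0 (funext h)
  · exact not_not.2 (le_antisymm hi₀ (hv i₀))
  · have hrow : ∑ j, A a j * v j = 0 := by
      simpa [mulVec, dotProduct, not_not.1 ha] using congrFun heig a
    have hab := (sum_eq_zero_iff_of_nonneg fun j _ => mul_nonneg (hA a j) (hv j)).1 hrow b
      (mem_univ b)
    exact (mul_eq_zero.1 hab).resolve_right hb

lemma norm_le_of_mem_spectrum_of_mulVec_eq_smul {ι : Type*} [Fintype ι] [DecidableEq ι]
    {A : Matrix ι ι ℝ} (hA : ∀ i j, 0 ≤ A i j) {v : ι → ℝ} {r : ℝ} (hv : ∀ i, 0 < v i)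
    (heig : A *ᵥ v = r • v) {μ : ℂ} (hμ : μ ∈ spectrum ℂ (A.map Complex.ofReal)) :
    ‖μ‖ ≤ r := by
  obtain ⟨w, hw0, hw⟩ := (mem_spectrum_iff_exists_mulVec_eq_smul _ μ).1 hμ
  obtain ⟨k, hk⟩ : ∃ k, w k ≠ 0 := by
    by_contra! h
    exact hw0 (funext h)
  obtain ⟨i₀, -, hmax⟩ := exists_max_image univ (fun i => ‖w i‖ / v i) ⟨k, mem_univ k⟩
  set c := ‖w i₀‖ / v i₀
  have hwc : ∀ j, ‖w j‖ ≤ c * v j := fun j =>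
    (div_le_iff₀ (hv j)).1 (hmax j (mem_univ j))
  have hci₀ : c * v i₀ = ‖w i₀‖ := div_mul_cancel₀ _ (hv i₀).ne'
  have hc : 0 < c := pos_of_mul_pos_left ((norm_pos_iff.2 hk).trans_le (hwc k)) (hv k).le
  have hwi₀ : 0 < ‖w i₀‖ := hci₀ ▸ mul_pos hc (hv i₀)
  have key : ‖μ‖ * ‖w i₀‖ ≤ r * ‖w i₀‖ :=
    calc ‖μ‖ * ‖w i₀‖ = ‖∑ j, (A i₀ j : ℂ) * w j‖ := by
          rw [← norm_mul, ← smul_eq_mul, ← Pi.smul_apply, ← hw]; rfl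
      _ ≤ ∑ j, A i₀ j * ‖w j‖ := by
          refine (norm_sum_le _ _).trans_eq (sum_congr rfl fun j _ => ?_)
          rw [norm_mul, Complex.norm_real, Real.norm_of_nonneg (hA i₀ j)]
      _ ≤ ∑ j, A i₀ j * (c * v j) :=
          sum_le_sum fun j _ => mul_le_mul_of_nonneg_left (hwc j) (hA i₀ j)
      _ = c * (r * v i₀) := by
          rw [← smul_eq_mul r, ← Pi.smul_apply, ← heig, mulVec, dotProduct, mul_sum]
          exact sum_congr rfl fun j _ => by ring
      _ = r * ‖w i₀‖ := by rw [mul_left_comm, hci₀]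
  exact le_of_mul_le_mul_right key hwi₀

lemma ofReal_mem_spectrum_map_of_mulVec_eq_smul {ι : Type*} [Fintype ι] [DecidableEq ι]
    {A : Matrix ι ι ℝ} {v : ι → ℝ} {r : ℝ} (hv0 : v ≠ 0) (heig : A *ᵥ v = r • v) :
    (r : ℂ) ∈ spectrum ℂ (A.map Complex.ofReal) := by
  refine (mem_spectrum_iff_exists_mulVec_eq_smul _ _).2
    ⟨Complex.ofRealHom ∘ v, ?_, funext fun i => ?_⟩
  · exact fun h => hv0 (funext fun i => Complex.ofReal_injective (congrFun h i))
  · refine (RingHom.map_mulVec Complex.ofRealHom A v i).symm.trans ?_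
    simp [heig]

lemma specRad_eq_of_mulVec_eq_smul {n : ℕ} {A : Matrix (Fin n) (Fin n) ℝ} (hA : ∀ i j, 0 ≤ A i j)
    {v : Fin n → ℝ} {r : ℝ} (hv : ∀ i, 0 < v i) (hv0 : v ≠ 0) (heig : A *ᵥ v = r • v) :
    specRad A = r := by
  have hmem := ofReal_mem_spectrum_map_of_mulVec_eq_smul hv0 heig
  have hbound := fun μ hμ => norm_le_of_mem_spectrum_of_mulVec_eq_smul (μ := μ) hA hv heig hμ
  have hr : 0 ≤ r := (norm_nonneg _).trans (hbound _ hmem)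
  refine IsGreatest.csSup_eq ⟨⟨r, hmem, by simp [hr]⟩, ?_⟩
  rintro _ ⟨μ, hμ, rfl⟩
  exact hbound μ hμ

theorem stmt11 {n : ℕ} (T : (Fin n → ℝ) → (Fin n → ℝ))
    (M : (Fin n → ℝ) → (Fin n → ℝ) → Matrix (Fin n) (Fin n) ℝ)
    (hM : ∀ y z : Fin n → ℝ, (∀ i, 0 < y i) → (∀ i, 0 < z i) →
      T z - T y = (M z y).mulVec (z - y))
    (hMnn : ∀ y z : Fin n → ℝ, (∀ i, 0 < y i) → (∀ i, 0 < z i) →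
      ∀ i j, 0 ≤ M z y i j)
    (hMirr : ∀ y z : Fin n → ℝ, (∀ i, 0 < y i) → (∀ i, 0 < z i) →
      MatIrreducible (M z y))
    (y z : Fin n → ℝ) (hy : ∀ i, 0 < y i) (hz : ∀ i, 0 < z i)
    (hfy : T y = y) (hfz : T z = z) (hle : y ≤ z) (hne : y ≠ z) :
    (∀ i, y i < z i) ∧ specRad (M z y) = 1 := by
  have heig : M z y *ᵥ (z - y) = (1 : ℝ) • (z - y) := by
    rw [one_smul, ← hM y z hy hz, hfy, hfz]
  have hnn := hMnn y z hy hz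
  have hne' : z - y ≠ 0 := sub_ne_zero.2 hne.symm
  have hpos : ∀ i, 0 < (z - y) i :=
    (hMirr y z hy hz).pos_of_mulVec_eq_smul hnn (fun i => sub_nonneg.2 (hle i)) hne' heig
  exact ⟨fun i => sub_pos.1 (hpos i), specRad_eq_of_mulVec_eq_smul hnn hpos hne' heig⟩
end

section
/- Let T : (ℝ₊*)ⁿ → ℝⁿ satisfy T(ȳ) − T(y) = M(ȳ,y)(ȳ − y), where M is strictly antitone in each argument with respect to the componentwise order on Mₙ(ℝ₊) and M(ȳ,y) is irreducible for all y, ȳ. Then the set of fixed points of T contains no chain of three elements: there do not exist fixed points y, ȳ, z with y ≤ ȳ ≤ z, y ≠ ȳ, ȳ ≠ z. -/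
lemma matReducible_of_support {n : ℕ} (C : Matrix (Fin n) (Fin n) ℝ)
    (S : Finset (Fin n)) (hne : S.Nonempty) (hproper : S ≠ Finset.univ)
    (hzero : ∀ i, i ∉ S → ∀ j ∈ S, C i j = 0) : MatReducible C := by
  classical
  set r := S.card with hr
  have hr1 : 1 ≤ r := Finset.card_pos.mpr hne
  have hrn : r < n := by
    have hle : S.card ≤ n := by
      simpa using S.card_le_univ
    have hne' : S.card ≠ n := by
      intro h
      exact hproper (Finset.card_eq_iff_eq_univ S |>.mp (by simpa using h))
    omega
  have hcompl : Sᶜ.card = n - r := by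
    simp [Finset.card_compl, hr]
  let e1 := S.orderIsoOfFin hr.symm
  let e2 := Sᶜ.orderIsoOfFin hcompl
  let f : Fin n → Fin n := fun i =>
    if h : (i : ℕ) < r then (e1 ⟨(i : ℕ), h⟩ : Fin n)
    else (e2 ⟨(i : ℕ) - r, by have := i.2; omega⟩ : Fin n)
  have hfS : ∀ i : Fin n, (h : (i : ℕ) < r) → f i ∈ S := by
    intro i h
    simp only [f, dif_pos h]
    exact (e1 ⟨(i : ℕ), h⟩).2
  have hfC : ∀ i : Fin n, ¬ (i : ℕ) < r → f i ∉ S := by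
    intro i h
    simp only [f, dif_neg h]
    exact Finset.mem_compl.mp (e2 _).2
  have hinj : Function.Injective f := by
    intro a b hab
    by_cases ha : (a : ℕ) < r <;> by_cases hb : (b : ℕ) < r
    · simp only [f, dif_pos ha, dif_pos hb] at hab
      have h2 := e1.injective (Subtype.ext hab)
      exact Fin.ext (by simpa using congrArg (fun p : Fin r => (p : ℕ)) h2)
    · exact absurd hab (by
        intro h
        exact hfC b hb (h ▸ hfS a ha))
    · exact absurd hab.symm (by
        intro h
        exact hfC a ha (h ▸ hfS b hb))
    · simp only [f, dif_neg ha, dif_neg hb] at hab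
      have h2 := e2.injective (Subtype.ext hab)
      have h3 : (a : ℕ) - r = (b : ℕ) - r :=
        congrArg (fun p : Fin (n - r) => (p : ℕ)) h2
      exact Fin.ext (by omega)
  let σ := Equiv.ofBijective f (Finite.injective_iff_bijective.mp hinj)
  refine ⟨σ, r, hr1, by omega, ?_⟩
  intro i j hi hj
  have h1 : σ i = f i := rfl
  have h2 : σ j = f j := rfl
  rw [h1, h2]
  exact hzero _ (hfC i (by omega)) _ (hfS j hj)

lemma pos_of_irred {n : ℕ} (C : Matrix (Fin n) (Fin n) ℝ)
    (hC : ∀ i j, 0 ≤ C i j) (hirr : MatIrreducible C)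
    (x : Fin n → ℝ) (hx0 : ∀ i, 0 ≤ x i) (hxne : x ≠ 0)
    (hle : ∀ i, x i = 0 → C.mulVec x i ≤ 0) : ∀ i, 0 < x i := by
  classical
  by_contra h
  push_neg at h
  obtain ⟨i0, hi0⟩ := h
  have hxi0 : x i0 = 0 := le_antisymm hi0 (hx0 i0)
  set S : Finset (Fin n) := Finset.univ.filter (fun i => 0 < x i) with hS
  have hne : S.Nonempty := by
    obtain ⟨j, hj⟩ : ∃ j, x j ≠ 0 := by
      by_contra hc
      push_neg at hc
      exact hxne (funext hc)
    exact ⟨j, by simp [hS, lt_of_le_of_ne (hx0 j) (Ne.symm hj)]⟩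
  have hproper : S ≠ Finset.univ := by
    intro h
    have : i0 ∈ S := h ▸ Finset.mem_univ i0
    simp [hS, hxi0] at this
  have hzero : ∀ i, i ∉ S → ∀ j ∈ S, C i j = 0 := by
    intro i hi j hj
    have hxi : x i = 0 := by
      by_contra hc
      exact hi (by simp [hS, lt_of_le_of_ne (hx0 i) (Ne.symm hc)])
    have hsum : C.mulVec x i ≤ 0 := hle i hxi
    have hsum' : C.mulVec x i = ∑ k, C i k * x k := by
      simp [Matrix.mulVec, dotProduct]
    have hnn : ∀ k ∈ Finset.univ, 0 ≤ C i k * x k := fun k _ =>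
      mul_nonneg (hC i k) (hx0 k)
    have hzsum : ∑ k, C i k * x k = 0 :=
      le_antisymm (hsum' ▸ hsum) (Finset.sum_nonneg hnn)
    have hall := (Finset.sum_eq_zero_iff_of_nonneg hnn).mp hzsum
    have hjj : C i j * x j = 0 := hall j (Finset.mem_univ j)
    have hxj : 0 < x j := by simpa [hS] using hj
    exact (mul_eq_zero.mp hjj).resolve_right (ne_of_gt hxj)
  exact hirr (matReducible_of_support C S hne hproper hzero)

theorem stmt12 {n : ℕ} (T : (Fin n → ℝ) → (Fin n → ℝ))
    (M : (Fin n → ℝ) → (Fin n → ℝ) → Matrix (Fin n) (Fin n) ℝ)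
    (hM : ∀ y z : Fin n → ℝ, (∀ i, 0 < y i) → (∀ i, 0 < z i) →
      T z - T y = (M z y).mulVec (z - y))
    (hMnn : ∀ y z : Fin n → ℝ, (∀ i, 0 < y i) → (∀ i, 0 < z i) →
      ∀ i j, 0 ≤ M z y i j)
    (hMirr : ∀ y z : Fin n → ℝ, (∀ i, 0 < y i) → (∀ i, 0 < z i) →
      MatIrreducible (M z y))
    (hManti : ∀ y₁ y₂ z₁ z₂ : Fin n → ℝ,
      (∀ i, 0 < y₁ i) → (∀ i, 0 < y₂ i) → (∀ i, 0 < z₁ i) → (∀ i, 0 < z₂ i) →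
      y₁ ≤ z₁ → y₂ ≤ z₂ → (y₁, y₂) ≠ (z₁, z₂) →
      (∀ i j, M z₁ z₂ i j ≤ M y₁ y₂ i j) ∧ M z₁ z₂ ≠ M y₁ y₂) :
    ¬ ∃ y z w : Fin n → ℝ,
      (∀ i, 0 < y i) ∧ (∀ i, 0 < z i) ∧ (∀ i, 0 < w i) ∧
      T y = y ∧ T z = z ∧ T w = w ∧
      y ≤ z ∧ z ≤ w ∧ y ≠ z ∧ z ≠ w := by
  rintro ⟨y, z, w, hy, hz, hw, hTy, hTz, hTw, hyz, hzw, hyzne, hzwne⟩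
  classical
  set u : Fin n → ℝ := z - y with hu_def
  set v : Fin n → ℝ := w - z with hv_def
  set B := M z y with hB
  set A := M w z with hA
  set C := M w y with hC
  -- eigen equations
  have hBu : B.mulVec u = u := by
    have h := hM y z hy hz
    rw [hTy, hTz] at h
    exact h.symm
  have hAv : A.mulVec v = v := by
    have h := hM z w hz hw
    rw [hTz, hTw] at h
    exact h.symm
  have huv : u + v = w - y := by
    rw [hu_def, hv_def]; abel
  have hCuv : C.mulVec (u + v) = u + v := by
    have h := hM y w hy hw
    rw [hTy, hTw] at h
    rw [huv]
    exact h.symm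
  -- u, v nonneg and nonzero
  have hu0 : ∀ i, 0 ≤ u i := fun i => sub_nonneg.mpr (hyz i)
  have hv0 : ∀ i, 0 ≤ v i := fun i => sub_nonneg.mpr (hzw i)
  have hune : u ≠ 0 := by
    intro h
    apply hyzne
    funext i
    have h2 := congrFun h i
    rw [hu_def] at h2
    simp only [Pi.sub_apply, Pi.zero_apply] at h2
    linarith
  have hvne : v ≠ 0 := by
    intro h
    apply hzwne
    funext i
    have h2 := congrFun h i
    rw [hv_def] at h2
    simp only [Pi.sub_apply, Pi.zero_apply] at h2
    linarith
  have hupos : ∀ i, 0 < u i :=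
    pos_of_irred B (hMnn y z hy hz) (hMirr y z hy hz) u hu0 hune
      (fun i hi => by rw [hBu]; exact le_of_eq hi)
  have hvpos : ∀ i, 0 < v i :=
    pos_of_irred A (hMnn z w hz hw) (hMirr z w hz hw) v hv0 hvne
      (fun i hi => by rw [hAv]; exact le_of_eq hi)
  -- antitone comparisons
  have hCB : (∀ i j, C i j ≤ B i j) ∧ C ≠ B := by
    have := hManti z y w y hz hy hw hy hzw (le_refl y)
      (by intro h; exact hzwne (congrArg Prod.fst h))
    exact this
  have hACle : ∀ i j, A i j ≤ C i j := by
    have := hManti w y w z hw hy hw hz (le_refl w) hyz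
      (by intro h; exact hyzne (congrArg Prod.snd h))
    exact this.1
  -- d
  set d : Fin n → ℝ := u - C.mulVec u with hd_def
  have hCu : C.mulVec u = u - d := by rw [hd_def]; abel
  have hCv : C.mulVec v = v + d := by
    have h := hCuv
    rw [Matrix.mulVec_add, hCu] at h
    funext i
    have := congrFun h i
    simp only [Pi.add_apply, Pi.sub_apply] at this ⊢
    linarith
  have hd0 : ∀ i, 0 ≤ d i := by
    intro i
    have hle : C.mulVec u i ≤ B.mulVec u i := by
      simp only [Matrix.mulVec, dotProduct]
      exact Finset.sum_le_sum fun j _ =>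
        mul_le_mul_of_nonneg_right (hCB.1 i j) (hupos j).le
    rw [hBu] at hle
    have := congrFun hCu i
    simp only [Pi.sub_apply] at this
    linarith
  have hdne : d ≠ 0 := by
    obtain ⟨i0, j0, hij⟩ : ∃ i0 j0, C i0 j0 ≠ B i0 j0 := by
      by_contra hc
      push_neg at hc
      exact hCB.2 (by ext i j; exact hc i j)
    have hlt : C.mulVec u i0 < B.mulVec u i0 := by
      simp only [Matrix.mulVec, dotProduct]
      refine Finset.sum_lt_sum (fun j _ =>
        mul_le_mul_of_nonneg_right (hCB.1 i0 j) (hupos j).le)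
        ⟨j0, Finset.mem_univ j0, ?_⟩
      exact mul_lt_mul_of_pos_right (lt_of_le_of_ne (hCB.1 i0 j0) hij) (hupos j0)
    rw [hBu] at hlt
    intro h
    have := congrFun hCu i0
    rw [h] at this
    simp only [Pi.sub_apply, Pi.zero_apply] at this
    rw [this] at hlt
    simp at hlt
  -- the minimizing index
  have hnem : Nonempty (Fin n) := by
    by_contra hc
    exact hune (funext fun i => absurd ⟨i⟩ hc)
  obtain ⟨istar, _, hmin⟩ := Finset.exists_min_image Finset.univ
    (fun i => u i / v i) (Finset.univ_nonempty)
  set t : ℝ := u istar / v istar with ht_def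
  have ht0 : 0 < t := div_pos (hupos istar) (hvpos istar)
  set x : Fin n → ℝ := u - t • v with hx_def
  have hx0 : ∀ i, 0 ≤ x i := by
    intro i
    have h1 : t ≤ u i / v i := hmin i (Finset.mem_univ i)
    have h2 : t * v i ≤ u i := (le_div_iff₀ (hvpos i)).mp h1
    simp only [hx_def, Pi.sub_apply, Pi.smul_apply, smul_eq_mul]
    linarith
  have hxstar : x istar = 0 := by
    have hv' : v istar ≠ 0 := (hvpos istar).ne'
    simp only [hx_def, Pi.sub_apply, Pi.smul_apply, smul_eq_mul, ht_def]
    rw [div_mul_cancel₀ _ hv', sub_self]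
  have hxne : x ≠ 0 := by
    intro h
    have huv' : u = t • v := by
      funext i
      have := congrFun h i
      simp only [hx_def, Pi.sub_apply, Pi.smul_apply, smul_eq_mul,
        Pi.zero_apply] at this
      simp only [Pi.smul_apply, smul_eq_mul]
      linarith
    have : u - d = t • (v + d) := by
      rw [← hCu, huv', Matrix.mulVec_smul, hCv]
    have hd_zero : d = 0 := by
      funext i
      have h1 := congrFun this i
      have h2 := congrFun huv' i
      simp only [Pi.sub_apply, Pi.smul_apply, Pi.add_apply, smul_eq_mul,
        Pi.zero_apply] at h1 h2 ⊢
      nlinarith [hd0 i]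
    exact hdne hd_zero
  have hlex : ∀ i, x i = 0 → C.mulVec x i ≤ 0 := by
    intro i hi
    have h1 : C.mulVec x = (u - d) - t • (v + d) := by
      rw [hx_def, Matrix.mulVec_sub, Matrix.mulVec_smul, hCu, hCv]
    have h2 := congrFun h1 i
    simp only [Pi.sub_apply, Pi.smul_apply, Pi.add_apply, smul_eq_mul] at h2
    have h3 : x i = u i - t * v i := by
      simp [hx_def]
    rw [h3] at hi
    have h4 : 0 ≤ (1 + t) * d i := mul_nonneg (by linarith) (hd0 i)
    nlinarith [h2, hi, h4]
  have := pos_of_irred C (hMnn y w hy hw) (hMirr y w hy hw) x hx0 hxne hlex istar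
  rw [hxstar] at this
  exact lt_irrefl 0 this
end
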